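/- Let G = (V, E) be a finite simple graph, let α, β ≥ 1 be reals, let ℓ : V → ℕ be a level function, and let w be the level-induced edge weights w(x,y) = β^{−max(ℓ(x), ℓ(y))}. Suppose Property 1 holds: W_y < 1 for every node y, and W_y ≥ 1/(αβ) for every node y with ℓ(y) > 0. Then for every vertex cover C′ of G, the set C = {v ∈ V : ℓ(v) > 0} satisfies |C| ≤ 2αβ · |C′|; that is, C is a 2αβ-approximate minimum vertex cover of G. -/

import Mathlib

open Finset

variable {V : Type*}

/-- The weight of a node `v`: the sum of the weights of the edges incident on `v`. -/
noncomputable def nodeWeight [Fintype V] [DecidableEq V] (G : SimpleGraph V)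
    [DecidableRel G.Adj] (w : Sym2 V → ℝ) (v : V) : ℝ :=
  ∑ e ∈ G.edgeFinset, if v ∈ e then w e else 0

/-- The level-induced edge weights `w(x,y) = β ^ (-max(ℓ x, ℓ y))`. -/
noncomputable def levelWeight (β : ℝ) (ℓ : V → ℕ) : Sym2 V → ℝ :=
  Sym2.lift ⟨fun x y => β ^ (-(max (ℓ x) (ℓ y) : ℤ)), fun x y => by simp [max_comm]⟩

/-- A vertex cover: every edge has at least one endpoint in the set. -/
def IsVertexCover (G : SimpleGraph V) (C : Set V) : Prop :=
  ∀ ⦃u v : V⦄, G.Adj u v → u ∈ C ∨ v ∈ C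

/-!
The level-induced weights form a fractional matching (`W_v < 1`), so by LP duality their size is
at most the size of any vertex cover `C'`: each edge is counted at a cover endpoint, whence
`∑_e w e ≤ ∑_{v ∈ C'} W_v ≤ |C'|`. On the other hand every node of positive level has weight at
least `1/(αβ)`, and the node weights add up to twice the size of the matching, so
`|C| / (αβ) ≤ ∑_v W_v = 2 ∑_e w e ≤ 2 |C'|`.
-/

section FractionalMatching

variable [Fintype V] [DecidableEq V] (G : SimpleGraph V) [DecidableRel G.Adj] {w : Sym2 V → ℝ}

lemma nodeWeight_nonneg (hw : ∀ e, 0 ≤ w e) (v : V) : 0 ≤ nodeWeight G w v :=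
  sum_nonneg fun e _ => by split_ifs <;> simp [hw e]

variable (w) in
lemma sum_nodeWeight_eq_two_mul_sum_edge :
    ∑ v, nodeWeight G w v = 2 * ∑ e ∈ G.edgeFinset, w e := by
  rw [mul_sum]
  unfold nodeWeight
  rw [sum_comm]
  refine sum_congr rfl fun e he => ?_
  have hcard : #e.toFinset = 2 :=
    Sym2.card_toFinset_of_not_isDiag e (G.not_isDiag_of_mem_edgeSet (G.mem_edgeFinset.mp he))
  have hfilter : ({v | v ∈ e} : Finset V) = e.toFinset := by ext; simp
  rw [← sum_filter, hfilter, sum_const, hcard, nsmul_eq_mul, Nat.cast_ofNat]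

lemma sum_edge_le_sum_nodeWeight_of_isVertexCover (hw : ∀ e, 0 ≤ w e) {C : Finset V}
    (hC : IsVertexCover G C) : ∑ e ∈ G.edgeFinset, w e ≤ ∑ v ∈ C, nodeWeight G w v := by
  unfold nodeWeight
  rw [sum_comm]
  refine sum_le_sum fun e he => ?_
  obtain ⟨v, hvC, hve⟩ : ∃ v ∈ C, v ∈ e := by
    induction e using Sym2.ind with
    | _ x y =>
      rcases hC (G.mem_edgeFinset.mp he) with hx | hy
      · exact ⟨x, hx, Sym2.mem_mk_left x y⟩
      · exact ⟨y, hy, Sym2.mem_mk_right x y⟩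
  calc w e = if v ∈ e then w e else 0 := (if_pos hve).symm
    _ ≤ ∑ u ∈ C, if u ∈ e then w e else 0 :=
      single_le_sum (f := fun u => if u ∈ e then w e else 0)
        (fun u _ => by split_ifs <;> simp [hw e]) hvC

lemma sum_nodeWeight_le_two_mul_card_of_isVertexCover (hw : ∀ e, 0 ≤ w e)
    (hW : ∀ v, nodeWeight G w v ≤ 1) (s : Finset V) {C : Finset V} (hC : IsVertexCover G C) :
    ∑ v ∈ s, nodeWeight G w v ≤ 2 * #C :=
  calc ∑ v ∈ s, nodeWeight G w v
      ≤ ∑ v, nodeWeight G w v :=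
        sum_le_sum_of_subset_of_nonneg (subset_univ s) fun v _ _ => nodeWeight_nonneg G hw v
    _ = 2 * ∑ e ∈ G.edgeFinset, w e := sum_nodeWeight_eq_two_mul_sum_edge G w
    _ ≤ 2 * ∑ v ∈ C, nodeWeight G w v := by
        gcongr; exact sum_edge_le_sum_nodeWeight_of_isVertexCover G hw hC
    _ ≤ 2 * ∑ _v ∈ C, (1 : ℝ) := by gcongr with v; exact hW v
    _ = 2 * #C := by simp

end FractionalMatching

lemma levelWeight_nonneg {β : ℝ} (hβ : 0 ≤ β) (ℓ : V → ℕ) (e : Sym2 V) :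
    0 ≤ levelWeight β ℓ e := by
  induction e using Sym2.ind with
  | _ x y => exact zpow_nonneg hβ _

theorem stmt4 [Fintype V] [DecidableEq V] (G : SimpleGraph V) [DecidableRel G.Adj]
    (α β : ℝ) (hα : 1 ≤ α) (hβ : 1 ≤ β) (ℓ : V → ℕ)
    (hlt : ∀ y : V, nodeWeight G (levelWeight β ℓ) y < 1)
    (hge : ∀ y : V, 0 < ℓ y → 1 / (α * β) ≤ nodeWeight G (levelWeight β ℓ) y) :
    ∀ C' : Set V, IsVertexCover G C' →
      (({v : V | 0 < ℓ v} : Set V).ncard : ℝ) ≤ 2 * α * β * (C'.ncard : ℝ) := by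
  intro C' hC'
  have hαβ : 0 < α * β := by positivity
  set C : Finset V := {v | 0 < ℓ v}
  obtain ⟨D, rfl⟩ : ∃ D : Finset V, (D : Set V) = C' := ⟨C'.toFinite.toFinset, by simp⟩
  have hcard : (#C : ℝ) * (1 / (α * β)) ≤ 2 * #D :=
    calc (#C : ℝ) * (1 / (α * β)) = #C • (1 / (α * β)) := (nsmul_eq_mul _ _).symm
      _ ≤ ∑ v ∈ C, nodeWeight G (levelWeight β ℓ) v :=
        card_nsmul_le_sum _ _ _ fun v hv => hge v (mem_filter.mp hv).2
      _ ≤ 2 * #D := sum_nodeWeight_le_two_mul_card_of_isVertexCover G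
        (levelWeight_nonneg (by linarith) ℓ) (fun v => (hlt v).le) C hC'
  rw [mul_one_div, div_le_iff₀ hαβ] at hcard
  rw [show {v : V | 0 < ℓ v} = (C : Set V) by simp [C], Set.ncard_coe_finset, Set.ncard_coe_finset]
  linarith
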